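/- arXiv:1605.05443 — 4 statements merged into one kernel-verified Lean document; each statement's English description precedes it below -/
import Mathlib

section
/- The sequences (e1, e2, e3, e4, e5) and (b, e1, e2, e3, e4) are the only tight paths of length five in H; that is, these are the only sequences of five edges of H of the form ({u_i,...,u_{i+4}})_{i=1}^{5} for distinct vertices u_1, ..., u_9 of H. -/
open Finset

/-- Edge r = {z, v1, v3, v5, v8} (z is vertex 0, vᵢ is vertex i). -/
def er : Finset (Fin 10) := {0, 1, 3, 5, 8}
/-- Edge g = {z, v2, v4, v7, v9}. -/
def eg : Finset (Fin 10) := {0, 2, 4, 7, 9}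
/-- Edge a = {v1, v4, v6, v8, v9}. -/
def ea : Finset (Fin 10) := {1, 4, 6, 8, 9}
/-- Edge b = {v9, v1, v2, v3, v4}. -/
def eb : Finset (Fin 10) := {9, 1, 2, 3, 4}
def ee1 : Finset (Fin 10) := {1, 2, 3, 4, 5}
def ee2 : Finset (Fin 10) := {2, 3, 4, 5, 6}
def ee3 : Finset (Fin 10) := {3, 4, 5, 6, 7}
def ee4 : Finset (Fin 10) := {4, 5, 6, 7, 8}
def ee5 : Finset (Fin 10) := {5, 6, 7, 8, 9}

/-- The edge set of the 5-uniform hypergraph H. -/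
def Hedges : Finset (Finset (Fin 10)) := {er, eg, ea, eb, ee1, ee2, ee3, ee4, ee5}

/-- Degree of a vertex with respect to an edge set. -/
def deg (E : Finset (Finset (Fin 10))) (x : Fin 10) : ℕ :=
  (E.filter (fun s => x ∈ s)).card

/-- The i-th edge of a candidate tight path given by vertex sequence u. -/
def te (u : ℕ → Fin 10) (i : ℕ) : Finset (Fin 10) :=
  {u i, u (i+1), u (i+2), u (i+3), u (i+4)}

/-- Ordered pairs of distinct edges of H sharing 4 vertices. -/
def pairOK (A B : Finset (Fin 10)) : Prop :=
    (A = eb ∧ B = ee1) ∨ (A = ee1 ∧ B = eb) ∨ (A = ee1 ∧ B = ee2) ∨ (A = ee2 ∧ B = ee1) ∨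
    (A = ee2 ∧ B = ee3) ∨ (A = ee3 ∧ B = ee2) ∨ (A = ee3 ∧ B = ee4) ∨ (A = ee4 ∧ B = ee3) ∨
    (A = ee4 ∧ B = ee5) ∨ (A = ee5 ∧ B = ee4)

lemma step (A B : Finset (Fin 10)) (hA : A ∈ Hedges) (hB : B ∈ Hedges)
    (hne : A ≠ B) (hcard : 4 ≤ (A ∩ B).card) : pairOK A B := by
  unfold pairOK
  simp only [Hedges, mem_insert, mem_singleton] at hA hB
  rcases hA with rfl|rfl|rfl|rfl|rfl|rfl|rfl|rfl|rfl <;>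
    rcases hB with rfl|rfl|rfl|rfl|rfl|rfl|rfl|rfl|rfl <;>
    revert hne hcard <;> decide

lemma chain (A B C D E : Finset (Fin 10))
    (p1 : pairOK A B) (p2 : pairOK B C) (p3 : pairOK C D) (p4 : pairOK D E)
    (q1 : A ≠ C) (q2 : B ≠ D) (q3 : C ≠ E) :
    ({A, B, C, D, E} : Finset (Finset (Fin 10))) = {ee1, ee2, ee3, ee4, ee5} ∨
      ({A, B, C, D, E} : Finset (Finset (Fin 10))) = {eb, ee1, ee2, ee3, ee4} := by
  rcases p1 with ⟨rfl,rfl⟩|⟨rfl,rfl⟩|⟨rfl,rfl⟩|⟨rfl,rfl⟩|⟨rfl,rfl⟩|⟨rfl,rfl⟩|⟨rfl,rfl⟩|⟨rfl,rfl⟩|⟨rfl,rfl⟩|⟨rfl,rfl⟩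
  all_goals rcases p2 with ⟨h2,rfl⟩|⟨h2,rfl⟩|⟨h2,rfl⟩|⟨h2,rfl⟩|⟨h2,rfl⟩|⟨h2,rfl⟩|⟨h2,rfl⟩|⟨h2,rfl⟩|⟨h2,rfl⟩|⟨h2,rfl⟩
  all_goals try exact absurd h2 (by decide)
  all_goals rcases p3 with ⟨h3,rfl⟩|⟨h3,rfl⟩|⟨h3,rfl⟩|⟨h3,rfl⟩|⟨h3,rfl⟩|⟨h3,rfl⟩|⟨h3,rfl⟩|⟨h3,rfl⟩|⟨h3,rfl⟩|⟨h3,rfl⟩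
  all_goals try exact absurd h3 (by decide)
  all_goals rcases p4 with ⟨h4,rfl⟩|⟨h4,rfl⟩|⟨h4,rfl⟩|⟨h4,rfl⟩|⟨h4,rfl⟩|⟨h4,rfl⟩|⟨h4,rfl⟩|⟨h4,rfl⟩|⟨h4,rfl⟩|⟨h4,rfl⟩
  all_goals try exact absurd h4 (by decide)
  all_goals revert q1 q2 q3
  all_goals decide

lemma card4 (a b c d : Fin 10) (h1 : a ≠ b) (h2 : a ≠ c) (h3 : a ≠ d)
    (h4 : b ≠ c) (h5 : b ≠ d) (h6 : c ≠ d) :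
    ({a, b, c, d} : Finset (Fin 10)).card = 4 := by
  rw [card_insert_of_notMem (by simp [h1, h2, h3]),
      card_insert_of_notMem (by simp [h4, h5]),
      card_insert_of_notMem (by simp [h6]), card_singleton]

theorem stmt9 (u : ℕ → Fin 10)
    (hinj : ∀ i j, i < 9 → j < 9 → u i = u j → i = j)
    (hedge : ∀ i < 5, te u i ∈ Hedges) :
    ({te u 0, te u 1, te u 2, te u 3, te u 4} : Finset (Finset (Fin 10))) =
        {ee1, ee2, ee3, ee4, ee5} ∨
      ({te u 0, te u 1, te u 2, te u 3, te u 4} : Finset (Finset (Fin 10))) =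
        {eb, ee1, ee2, ee3, ee4} := by
  have hne : ∀ i j, i < 9 → j < 9 → i ≠ j → u i ≠ u j :=
    fun i j hi hj hij h => hij (hinj i j hi hj h)
  have hne1 : ∀ i < 4, te u i ≠ te u (i + 1) := by
    intro i hi h
    have hm : u i ∈ te u (i + 1) := h ▸ (by simp [te])
    simp only [te, mem_insert, mem_singleton] at hm
    rcases hm with h'|h'|h'|h'|h' <;>
      exact hne i _ (by omega) (by omega) (by omega) h'
  have hne2 : ∀ i < 3, te u i ≠ te u (i + 2) := by
    intro i hi h
    have hm : u i ∈ te u (i + 2) := h ▸ (by simp [te])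
    simp only [te, mem_insert, mem_singleton] at hm
    rcases hm with h'|h'|h'|h'|h' <;>
      exact hne i _ (by omega) (by omega) (by omega) h'
  have hcard : ∀ i < 4, 4 ≤ ((te u i) ∩ (te u (i + 1))).card := by
    intro i hi
    have hs : ({u (i+1), u (i+2), u (i+3), u (i+4)} : Finset (Fin 10)) ⊆
        te u i ∩ te u (i + 1) := by
      intro x hx
      simp only [mem_insert, mem_singleton] at hx
      simp only [mem_inter, te, mem_insert, mem_singleton]
      rcases hx with rfl|rfl|rfl|rfl
      · exact ⟨Or.inr (Or.inl rfl), Or.inl rfl⟩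
      · constructor <;> simp [show i+1+1 = i+2 by ring]
      · constructor <;> simp [show i+1+2 = i+3 by ring]
      · constructor <;> simp [show i+1+3 = i+4 by ring]
    have h4 : ({u (i+1), u (i+2), u (i+3), u (i+4)} : Finset (Fin 10)).card = 4 :=
      card4 _ _ _ _ (hne _ _ (by omega) (by omega) (by omega))
        (hne _ _ (by omega) (by omega) (by omega))
        (hne _ _ (by omega) (by omega) (by omega))
        (hne _ _ (by omega) (by omega) (by omega))
        (hne _ _ (by omega) (by omega) (by omega))
        (hne _ _ (by omega) (by omega) (by omega))
    calc 4 = _ := h4.symm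
      _ ≤ _ := card_le_card hs
  exact chain _ _ _ _ _
    (step _ _ (hedge 0 (by norm_num)) (hedge 1 (by norm_num)) (hne1 0 (by norm_num)) (hcard 0 (by norm_num)))
    (step _ _ (hedge 1 (by norm_num)) (hedge 2 (by norm_num)) (hne1 1 (by norm_num)) (hcard 1 (by norm_num)))
    (step _ _ (hedge 2 (by norm_num)) (hedge 3 (by norm_num)) (hne1 2 (by norm_num)) (hcard 2 (by norm_num)))
    (step _ _ (hedge 3 (by norm_num)) (hedge 4 (by norm_num)) (hne1 3 (by norm_num)) (hcard 3 (by norm_num)))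
    (hne2 0 (by norm_num)) (hne2 1 (by norm_num)) (hne2 2 (by norm_num))
end

section
/- Let e, f be any two edges of H and let φ be a monomorphism from H_{ef} into H such that φ(e') = e' (as a set) for every edge e' of H_{ef}. Then φ is the identity map on the vertices of H. -/
open Finset

def edgeIdx : Fin 9 → Finset (Fin 10)
  | 0 => er | 1 => eg | 2 => ea | 3 => eb | 4 => ee1
  | 5 => ee2 | 6 => ee3 | 7 => ee4 | 8 => ee5

def memB (k : Fin 9) (x : Fin 10) : Bool :=
  [[true,true,false,true,false,true,false,false,true,false],
   [true,false,true,false,true,false,false,true,false,true],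
   [false,true,false,false,true,false,true,false,true,true],
   [false,true,true,true,true,false,false,false,false,true],
   [false,true,true,true,true,true,false,false,false,false],
   [false,false,true,true,true,true,true,false,false,false],
   [false,false,false,true,true,true,true,true,false,false],
   [false,false,false,false,true,true,true,true,true,false],
   [false,false,false,false,false,true,true,true,true,true]].getD k.val [] |>.getD x.val false

lemma bridge : ∀ (k : Fin 9) (x : Fin 10), x ∈ edgeIdx k ↔ memB k x = true := by decide

lemma edgeIdx_inj : Function.Injective edgeIdx := by decide

lemma edgeIdx_mem : ∀ k, edgeIdx k ∈ Hedges := by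
  intro k; fin_cases k <;> simp [edgeIdx, Hedges]

lemma sep_key : ∀ (i j : Fin 9) (x y : Fin 10),
    (∀ k : Fin 9, k = i ∨ k = j ∨ memB k x = memB k y) → x = y := by decide

lemma mem_edgeIdx (s : Finset (Fin 10)) (hs : s ∈ Hedges) : ∃ k, s = edgeIdx k := by
  simp only [Hedges, Finset.mem_insert, Finset.mem_singleton] at hs
  rcases hs with h|h|h|h|h|h|h|h|h
  exacts [⟨0, h⟩, ⟨1, h⟩, ⟨2, h⟩, ⟨3, h⟩, ⟨4, h⟩, ⟨5, h⟩, ⟨6, h⟩, ⟨7, h⟩, ⟨8, h⟩]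

theorem stmt13 (e f : Finset (Fin 10)) (he : e ∈ Hedges) (hf : f ∈ Hedges)
    (φ : Fin 10 → Fin 10) (hφ : Function.Injective φ)
    (hmono : ∀ s ∈ Hedges \ {e, f}, s.image φ ∈ Hedges)
    (hfix : ∀ s ∈ Hedges \ {e, f}, s.image φ = s) :
    φ = id := by
  have key : ∀ s ∈ Hedges \ ({e, f} : Finset (Finset (Fin 10))), ∀ x : Fin 10, (φ x ∈ s ↔ x ∈ s) := by
    intro s hs x
    constructor
    · intro hx
      rw [← hfix s hs] at hx
      obtain ⟨y, hy, hyx⟩ := Finset.mem_image.mp hx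
      rwa [← hφ hyx]
    · intro hx
      rw [← hfix s hs]
      exact Finset.mem_image_of_mem φ hx
  obtain ⟨i, rfl⟩ := mem_edgeIdx e he
  obtain ⟨j, rfl⟩ := mem_edgeIdx f hf
  funext x
  refine sep_key i j (φ x) x (fun k => ?_)
  by_cases hki : k = i
  · exact Or.inl hki
  by_cases hkj : k = j
  · exact Or.inr (Or.inl hkj)
  refine Or.inr (Or.inr ?_)
  have hs : edgeIdx k ∈ Hedges \ ({edgeIdx i, edgeIdx j} : Finset (Finset (Fin 10))) := by
    rw [Finset.mem_sdiff]
    refine ⟨edgeIdx_mem k, ?_⟩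
    simp only [Finset.mem_insert, Finset.mem_singleton]
    push_neg
    exact ⟨fun h => hki (edgeIdx_inj h), fun h => hkj (edgeIdx_inj h)⟩
  have hiff := key (edgeIdx k) hs x
  have : (memB k (φ x) = true) ↔ (memB k x = true) :=
    (bridge k (φ x)).symm.trans (hiff.trans (bridge k x))
  exact Bool.eq_iff_iff.mpr this
end

section
/- Let e, f be two edges of H with b, e5 ∈ H_{ef} (where b = {v9,v1,v2,v3,v4} and e5 = {v5,v6,v7,v8,v9}), and let φ be a monomorphism from H_{ef} into H. Then φ(v9) = v9. -/
/-!
The images of `b` and `e5` are edges of `H` meeting exactly in `φ 9`, which leaves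
`φ 9 ∈ {9, 0, 4, 5}`. The surviving edges that avoid a vertex `x` go injectively to edges that
avoid `φ x`, and at most two edges were removed; so a vertex avoided by many edges cannot go to
one avoided by few. This excludes `4` at once (`9` is avoided by five edges, `4` by two), and `0`
because `φ (b ∪ e5) = r ∪ g` forces `φ 0 = 6`. If `φ 9 = 5`, the same count forces both removed
edges to avoid `9`, so `g` and `a` survive; intersection sizes then pin down `φ g = r` and
`φ a = e3`, whence `φ 4 = 3`, and the at least two surviving edges through `4` avoiding `9` would
all have to go to `b`, the only edge through `3` avoiding `5`.
-/

open Finset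

section Counting

variable {α β : Type*} [DecidableEq α] [DecidableEq β] {φ : α → β}

lemma card_image_inter_image (hφ : Function.Injective φ) (s t : Finset α) :
    #(s.image φ ∩ t.image φ) = #(s ∩ t) := by
  rw [← image_inter _ _ hφ, card_image_of_injective _ hφ]

lemma apply_eq_of_image_univ_erase [Fintype α] [Fintype β] (hφ : Function.Injective φ) {x : α}
    {y : β} (h : (univ.erase x).image φ = univ.erase y) : φ x = y := by
  by_contra hxy
  have hmem : φ x ∈ (univ.erase x).image φ := h ▸ mem_erase.mpr ⟨hxy, mem_univ _⟩
  obtain ⟨z, hz, hzx⟩ := mem_image.mp hmem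
  exact (mem_erase.mp hz).1 (hφ hzx)

lemma card_filter_le_of_image_mem {E S : Finset (Finset α)} {F : Finset (Finset β)}
    (hφ : Function.Injective φ) (hmaps : ∀ s ∈ E \ S, s.image φ ∈ F) (P : Finset α → Prop)
    (Q : Finset β → Prop) [DecidablePred P] [DecidablePred Q] (hPQ : ∀ s, P s → Q (s.image φ)) :
    #({s ∈ E | P s}) ≤ #({t ∈ F | Q t}) + #({s ∈ S | P s}) := by
  have hsplit : {s ∈ E | P s} ⊆ {s ∈ E \ S | P s} ∪ {s ∈ S | P s} := by
    intro s
    simp only [mem_filter, mem_union, mem_sdiff]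
    tauto
  have hinj : #({s ∈ E \ S | P s}) ≤ #({t ∈ F | Q t}) := by
    refine card_le_card_of_injOn (·.image φ) (fun s hs => ?_)
      (fun s _ t _ h => image_injective hφ h)
    obtain ⟨hs, hP⟩ := mem_filter.mp hs
    exact mem_filter.mpr ⟨hmaps s hs, hPQ s hP⟩
  calc #({s ∈ E | P s}) ≤ #({s ∈ E \ S | P s}) + #({s ∈ S | P s}) :=
        (card_le_card hsplit).trans (card_union_le _ _)
    _ ≤ #({t ∈ F | Q t}) + #({s ∈ S | P s}) := by gcongr

end Counting

lemma mem_Hedges {X : Finset (Fin 10)} (hX : X ∈ Hedges) :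
    X = er ∨ X = eg ∨ X = ea ∨ X = eb ∨ X = ee1 ∨ X = ee2 ∨ X = ee3 ∨ X = ee4 ∨ X = ee5 := by
  simpa [Hedges] using hX

lemma Hedges_inter_eq_singleton {X Y : Finset (Fin 10)} (hX : X ∈ Hedges) (hY : Y ∈ Hedges)
    {c : Fin 10} (h : X ∩ Y = {c}) : c = 9 ∨ c = 4 ∨ (c = 0 ∧ X ∪ Y = univ.erase 6) ∨
      (c = 5 ∧ (X = ee1 ∧ Y = ee5 ∨ X = ee5 ∧ Y = ee1)) := by
  revert c h
  rcases mem_Hedges hX with rfl|rfl|rfl|rfl|rfl|rfl|rfl|rfl|rfl <;>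
    rcases mem_Hedges hY with rfl|rfl|rfl|rfl|rfl|rfl|rfl|rfl|rfl <;> decide

lemma eq_er_of_card_inter {G : Finset (Fin 10)} (hG : G ∈ Hedges) (h5 : 5 ∈ G)
    (h : #(G ∩ ee1) = 3 ∧ #(G ∩ ee5) = 2 ∨ #(G ∩ ee5) = 3 ∧ #(G ∩ ee1) = 2) : G = er := by
  revert h5 h
  rcases mem_Hedges hG with rfl|rfl|rfl|rfl|rfl|rfl|rfl|rfl|rfl <;> decide

lemma eq_ee3_of_card_inter {A : Finset (Fin 10)} (hA : A ∈ Hedges) (h1 : #(A ∩ ee1) = 3)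
    (h5 : #(A ∩ ee5) = 3) : A = ee3 := by
  revert h1 h5
  rcases mem_Hedges hA with rfl|rfl|rfl|rfl|rfl|rfl|rfl|rfl|rfl <;> decide

lemma image_eg_eq_er_and_image_ea_eq_ee3 {φ : Fin 10 → Fin 10} (hφ : Function.Injective φ)
    (hor : eb.image φ = ee1 ∧ ee5.image φ = ee5 ∨ eb.image φ = ee5 ∧ ee5.image φ = ee1)
    (hg : eg.image φ ∈ Hedges) (ha : ea.image φ ∈ Hedges) (h5 : φ 9 = 5) :
    eg.image φ = er ∧ ea.image φ = ee3 := by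
  have hg5 : 5 ∈ eg.image φ := h5 ▸ mem_image_of_mem φ (by decide)
  have hgb : #(eg.image φ ∩ eb.image φ) = 3 := by rw [card_image_inter_image hφ]; decide
  have hge : #(eg.image φ ∩ ee5.image φ) = 2 := by rw [card_image_inter_image hφ]; decide
  have hab : #(ea.image φ ∩ eb.image φ) = 3 := by rw [card_image_inter_image hφ]; decide
  have hae : #(ea.image φ ∩ ee5.image φ) = 3 := by rw [card_image_inter_image hφ]; decide
  rcases hor with ⟨hB, hE⟩ | ⟨hB, hE⟩ <;> rw [hB] at hgb hab <;> rw [hE] at hge hae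
  · exact ⟨eq_er_of_card_inter hg hg5 (.inl ⟨hgb, hge⟩), eq_ee3_of_card_inter ha hab hae⟩
  · exact ⟨eq_er_of_card_inter hg hg5 (.inr ⟨hgb, hge⟩), eq_ee3_of_card_inter ha hae hab⟩

section Monomorphism

variable {e f : Finset (Fin 10)} {φ : Fin 10 → Fin 10} (hφ : Function.Injective φ)
  (hmono : ∀ s ∈ Hedges \ {e, f}, s.image φ ∈ Hedges)
include hφ hmono

lemma card_filter_Hedges_le_add_two (P Q : Finset (Fin 10) → Prop) [DecidablePred P]
    [DecidablePred Q] (hPQ : ∀ s, P s → Q (s.image φ)) :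
    #({s ∈ Hedges | P s}) ≤ #({t ∈ Hedges | Q t}) + 2 := by
  refine (card_filter_le_of_image_mem hφ hmono P Q hPQ).trans ?_
  gcongr
  exact (card_filter_le _ _).trans card_le_two

lemma apply_nine_ne_four : φ 9 ≠ 4 := by
  intro h4
  have hcount := card_filter_Hedges_le_add_two hφ hmono (fun s => 9 ∉ s) (fun t => 4 ∉ t)
    (fun s hs => by rwa [← h4, hφ.mem_finset_image])
  have hE : #({s ∈ Hedges | 9 ∉ s}) = 5 := by decide
  have hF : #({t ∈ Hedges | 4 ∉ t}) = 2 := by decide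
  omega

lemma image_eb_union_image_ee5_ne : eb.image φ ∪ ee5.image φ ≠ univ.erase 6 := by
  intro hU
  have h06 : φ 0 = 6 := by
    refine apply_eq_of_image_univ_erase hφ ?_
    rw [← hU, ← image_union, show eb ∪ ee5 = univ.erase 0 by decide]
  have hcount := card_filter_Hedges_le_add_two hφ hmono (fun s => 0 ∉ s) (fun t => 6 ∉ t)
    (fun s hs => by rwa [← h06, hφ.mem_finset_image])
  have hE : #({s ∈ Hedges | 0 ∉ s}) = 7 := by decide
  have hF : #({t ∈ Hedges | 6 ∉ t}) = 4 := by decide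
  omega

lemma apply_nine_ne_five
    (hor : eb.image φ = ee1 ∧ ee5.image φ = ee5 ∨ eb.image φ = ee5 ∧ ee5.image φ = ee1) :
    φ 9 ≠ 5 := by
  intro h5
  -- Only three edges of `H` avoid `5`, so both removed edges avoid `9`.
  have hkeep : ∀ s ∈ Hedges, 9 ∈ s → s ∈ Hedges \ {e, f} := by
    have hcount := card_filter_le_of_image_mem hφ hmono (fun s => 9 ∉ s) (fun t => 5 ∉ t)
      (fun s hs => by rwa [← h5, hφ.mem_finset_image])
    have hS : #({s ∈ {e, f} | 9 ∉ s}) ≤ #({e, f} : Finset (Finset (Fin 10))) := card_filter_le _ _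
    have hE : #({s ∈ Hedges | 9 ∉ s}) = 5 := by decide
    have hF : #({t ∈ Hedges | 5 ∉ t}) = 3 := by decide
    have hef : ∀ s ∈ ({e, f} : Finset (Finset (Fin 10))), 9 ∉ s :=
      filter_card_eq (by have := card_le_two (a := e) (b := f); omega)
    exact fun s hs h9 => mem_sdiff.mpr ⟨hs, fun hsef => hef s hsef h9⟩
  obtain ⟨hG, hA⟩ := image_eg_eq_er_and_image_ea_eq_ee3 hφ hor
    (hmono _ (hkeep _ (by decide) (by decide))) (hmono _ (hkeep _ (by decide) (by decide))) h5
  have h43 : φ 4 = 3 := by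
    have h : φ 4 ∈ er ∩ ee3 := hG ▸ hA ▸ mem_inter.mpr
      ⟨mem_image_of_mem φ (by decide), mem_image_of_mem φ (by decide)⟩
    rw [show er ∩ ee3 = {3, 5} by decide, mem_insert, mem_singleton, ← h5] at h
    exact h.resolve_right fun h49 => absurd (hφ h49) (by decide)
  have hcount := card_filter_Hedges_le_add_two hφ hmono (fun s => 9 ∉ s ∧ 4 ∈ s)
    (fun t => 5 ∉ t ∧ 3 ∈ t) (fun s hs => by
      rwa [← h5, ← h43, hφ.mem_finset_image, hφ.mem_finset_image])
  have hE : #({s ∈ Hedges | 9 ∉ s ∧ 4 ∈ s}) = 4 := by decide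
  have hF : #({t ∈ Hedges | 5 ∉ t ∧ 3 ∈ t}) = 1 := by decide
  omega

end Monomorphism

theorem stmt15_general (e f : Finset (Fin 10))
    (φ : Fin 10 → Fin 10) (hφ : Function.Injective φ)
    (hmono : ∀ s ∈ Hedges \ {e, f}, s.image φ ∈ Hedges)
    (hb : eb ∈ Hedges \ {e, f}) (he5 : ee5 ∈ Hedges \ {e, f}) :
    φ 9 = 9 := by
  have hinter : eb.image φ ∩ ee5.image φ = {φ 9} := by
    rw [← image_inter _ _ hφ, show eb ∩ ee5 = {9} by decide, image_singleton]
  rcases Hedges_inter_eq_singleton (hmono _ hb) (hmono _ he5) hinter with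
    h9 | h4 | ⟨-, hU⟩ | ⟨h5, hor⟩
  · exact h9
  · exact absurd h4 (apply_nine_ne_four hφ hmono)
  · exact absurd hU (image_eb_union_image_ee5_ne hφ hmono)
  · exact absurd h5 (apply_nine_ne_five hφ hmono hor)

theorem stmt15 (e f : Finset (Fin 10)) (he : e ∈ Hedges) (hf : f ∈ Hedges)
    (φ : Fin 10 → Fin 10) (hφ : Function.Injective φ)
    (hmono : ∀ s ∈ Hedges \ {e, f}, s.image φ ∈ Hedges)
    (hb : eb ∈ Hedges \ {e, f}) (he5 : ee5 ∈ Hedges \ {e, f}) :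
    φ 9 = 9 :=
  stmt15_general e f φ hφ hmono hb he5
end

section
/- Let e, f be two edges of H such that H_{ef} contains a tight path of length 5, and let φ be a monomorphism from H_{ef} into H. Then φ is one of the following six permutations of V(H): the identity, (v9 v1 v2 v3 v4 v5 v6 v7 v8)(z), (v1 v9 v8 v7 v6 v5 v4 v3 v2)(z), (v9 v8)(v1 v7)(v2 v6)(v3 v5)(v4)(z), (v1 v8)(v2 v7)(v3 v6)(v4 v5)(v9)(z), (v1 v9)(v2 v8)(v3 v7)(v4 v6)(v5)(z). -/
open Finset

def sigma1 : Fin 10 → Fin 10 := ![0, 2, 3, 4, 5, 6, 7, 8, 9, 1]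
def sigma2 : Fin 10 → Fin 10 := ![0, 9, 1, 2, 3, 4, 5, 6, 7, 8]
def sigma3 : Fin 10 → Fin 10 := ![0, 7, 6, 5, 4, 3, 2, 1, 9, 8]
def sigma4 : Fin 10 → Fin 10 := ![0, 8, 7, 6, 5, 4, 3, 2, 1, 9]
def sigma5 : Fin 10 → Fin 10 := ![0, 9, 8, 7, 6, 5, 4, 3, 2, 1]

/-!
An injective map `φ` sending all edges of `H` but at most two onto edges of `H` is the identity.
If at most `k` edges are not sent onto edges, then the codegree of a pair of vertices drops by at
most `k` under `φ` (the other edges through the pair go injectively to edges through the image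
pair), and for every partial assignment along `φ` at most `k` edges have the image of their
assigned part outside every edge of `H`. A backtracking search over partial assignments pruned by
these two conditions, evaluated in the kernel, leaves only the identity for `k = 2`.
-/

namespace Hypergraph

variable {V : Type*} [DecidableEq V]

def codegree (S : Finset (Finset V)) (v w : V) : ℕ := #{s ∈ S | v ∈ s ∧ w ∈ s}

def badEdges (S T : Finset (Finset V)) (φ : V → V) : Finset (Finset V) :=
  {s ∈ S | s.image φ ∉ T}

theorem codegree_le_codegree_add_card_badEdges {S T : Finset (Finset V)} {φ : V → V}
    (hφ : Function.Injective φ) (v w : V) :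
    codegree S v w ≤ codegree T (φ v) (φ w) + #(badEdges S T φ) := by
  have hgood : #{s ∈ S | (v ∈ s ∧ w ∈ s) ∧ s.image φ ∈ T} ≤ codegree T (φ v) (φ w) := by
    refine card_le_card_of_injOn (·.image φ) (fun s hs => ?_) (image_injective hφ).injOn
    simp only [coe_filter, Set.mem_ofPred_eq] at hs ⊢
    exact ⟨hs.2.2, mem_image_of_mem φ hs.2.1.1, mem_image_of_mem φ hs.2.1.2⟩
  have hbad : #{s ∈ S | (v ∈ s ∧ w ∈ s) ∧ s.image φ ∉ T} ≤ #(badEdges S T φ) :=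
    card_le_card fun s hs => by simp only [badEdges, mem_filter] at hs ⊢; exact ⟨hs.1, hs.2.2⟩
  rw [codegree, ← card_filter_add_card_filter_not (fun s => s.image φ ∈ T),
    filter_filter, filter_filter]
  omega

def fitting (TL : List (Finset V)) (p : List (V × V)) (s : Finset V) : List (Finset V) :=
  TL.filter fun t => ∀ q ∈ p, q.1 ∈ s → q.2 ∈ t

/-- `fits` pairs each source edge with the target edges that can still contain its image; it is
maintained incrementally so that the kernel never recomputes it from `assignment`. -/
structure SearchState (V : Type*) where
  assignment : List (V × V)
  fits : List (Finset V × List (Finset V))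

def SearchState.extend (σ : SearchState V) (v x : V) : SearchState V where
  assignment := (v, x) :: σ.assignment
  fits := σ.fits.map fun (s, ts) => (s, if v ∈ s then ts.filter (x ∈ ·) else ts)

def SearchState.ofAssignment (SL TL : List (Finset V)) (p : List (V × V)) : SearchState V where
  assignment := p
  fits := SL.map fun s => (s, fitting TL p s)

theorem SearchState.ofAssignment_extend (SL TL : List (Finset V)) (p : List (V × V)) (v x : V) :
    (ofAssignment SL TL p).extend v x = ofAssignment SL TL ((v, x) :: p) := by
  simp only [extend, ofAssignment, List.map_map, SearchState.mk.injEq, true_and]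
  refine List.map_congr_left fun s _ => ?_
  simp only [Function.comp_apply, fitting, Prod.mk.injEq, true_and]
  split_ifs with hv
  · rw [List.filter_filter]
    refine List.filter_congr fun t _ => ?_
    rw [← Bool.decide_and, decide_eq_decide]
    simp [hv]
  · refine List.filter_congr fun t _ => ?_
    simp [hv]

def Admissible (k : ℕ) (S T : Finset (Finset V)) (σ : SearchState V) (v x : V) : Prop :=
  x ∉ σ.assignment.map Prod.snd ∧
  (∀ q ∈ (v, x) :: σ.assignment, codegree S v q.1 ≤ codegree T x q.2 + k) ∧
  (σ.extend v x).fits.countP (·.2.isEmpty) ≤ k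

instance (k : ℕ) (S T : Finset (Finset V)) (σ : SearchState V) (v x : V) :
    Decidable (Admissible k S T σ v x) :=
  inferInstanceAs (Decidable (_ ∧ _ ∧ _))

def candidates (k : ℕ) (SL TL : List (Finset V)) (vals : List V) : List V → List (SearchState V)
  | [] => [SearchState.ofAssignment SL TL []]
  | v :: vs => (candidates k SL TL vals vs).flatMap fun σ =>
      (vals.filter (Admissible k SL.toFinset TL.toFinset σ v)).map (σ.extend v)

section Soundness

variable {k : ℕ} {SL TL : List (Finset V)} {vals : List V} {φ : V → V}

theorem countP_fitting_isEmpty_le_card_badEdges (hSL : SL.Nodup) (l : List V) :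
    (SearchState.ofAssignment SL TL (l.map fun v => (v, φ v))).fits.countP (·.2.isEmpty) ≤
      #(badEdges SL.toFinset TL.toFinset φ) := by
  have hbad : #(badEdges SL.toFinset TL.toFinset φ) =
      SL.countP fun s => decide (s.image φ ∉ TL.toFinset) := by
    rw [List.countP_eq_length_filter, ← List.toFinset_card_of_nodup (hSL.filter _),
      List.toFinset_filter]
    simp only [badEdges, decide_eq_true_eq]
  rw [hbad, SearchState.ofAssignment, List.countP_map]
  refine List.countP_mono_left fun s _ hempty => ?_
  simp only [Function.comp_apply, List.isEmpty_iff, fitting, List.filter_eq_nil_iff] at hempty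
  simp only [decide_eq_true_eq, List.mem_toFinset]
  intro himage
  refine hempty _ himage ?_
  simp only [List.mem_map, decide_eq_true_eq]
  rintro _ ⟨a, _, rfl⟩ ha
  exact mem_image_of_mem φ ha

theorem ofAssignment_mem_candidates (hφ : Function.Injective φ) (hSL : SL.Nodup)
    (hvals : ∀ v, φ v ∈ vals) (hbad : #(badEdges SL.toFinset TL.toFinset φ) ≤ k) :
    ∀ {l : List V}, l.Nodup →
      SearchState.ofAssignment SL TL (l.map fun v => (v, φ v)) ∈ candidates k SL TL vals l
  | [], _ => List.mem_singleton_self _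
  | v :: vs, hl => by
    obtain ⟨hv, hvs⟩ := List.nodup_cons.mp hl
    have hnew : φ v ∉ (vs.map fun v => (v, φ v)).map Prod.snd := by
      simp only [List.map_map, List.mem_map, Function.comp_apply, not_exists, not_and]
      exact fun a ha hφa => hv (hφ hφa ▸ ha)
    have hcodeg : ∀ q ∈ (v :: vs).map fun v => (v, φ v),
        codegree SL.toFinset v q.1 ≤ codegree TL.toFinset (φ v) q.2 + k := by
      simp only [List.mem_map]
      rintro _ ⟨a, _, rfl⟩
      exact (codegree_le_codegree_add_card_badEdges hφ v a).trans (Nat.add_le_add_left hbad _)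
    have hunmatched := (countP_fitting_isEmpty_le_card_badEdges hSL (v :: vs)).trans hbad
    rw [List.map_cons, ← SearchState.ofAssignment_extend] at hunmatched
    refine List.mem_flatMap.mpr ⟨_, ofAssignment_mem_candidates hφ hSL hvals hbad hvs, ?_⟩
    rw [List.map_cons, ← SearchState.ofAssignment_extend]
    exact List.mem_map_of_mem
      (List.mem_filter.mpr ⟨hvals v, decide_eq_true ⟨hnew, hcodeg, hunmatched⟩⟩)

theorem eqOn_of_candidates_eq (hφ : Function.Injective φ) (hSL : SL.Nodup)
    (hvals : ∀ v, φ v ∈ vals) (hbad : #(badEdges SL.toFinset TL.toFinset φ) ≤ k)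
    {l : List V} (hl : l.Nodup) {ψ : V → V}
    (h : (candidates k SL TL vals l).map SearchState.assignment = [l.map fun v => (v, ψ v)]) :
    ∀ v ∈ l, φ v = ψ v := by
  have hmem := List.mem_map_of_mem (f := SearchState.assignment)
    (ofAssignment_mem_candidates hφ hSL hvals hbad hl)
  rw [h, List.mem_singleton] at hmem
  intro v hv
  exact (Prod.mk.inj (List.map_inj_left.mp hmem v hv)).2

end Soundness

end Hypergraph

open Hypergraph

def hedgeList : List (Finset (Fin 10)) := [er, eg, ea, eb, ee1, ee2, ee3, ee4, ee5]

/-- `candidates` assigns the last vertex first, so the search starts from the vertices of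
largest degree. -/
def searchOrder : List (Fin 10) := [0, 9, 8, 1, 7, 2, 6, 3, 5, 4]

theorem candidates_hedgeList :
    (candidates 2 hedgeList hedgeList (List.finRange 10) searchOrder).map SearchState.assignment =
      [searchOrder.map fun v => (v, v)] := by
  decide +kernel

theorem eq_id_of_card_badEdges_le_two {φ : Fin 10 → Fin 10} (hφ : Function.Injective φ)
    (h : #(badEdges Hedges Hedges φ) ≤ 2) : φ = id := by
  rw [show Hedges = hedgeList.toFinset by decide] at h
  funext v
  exact eqOn_of_candidates_eq hφ (by decide) (fun _ => List.mem_finRange _) h (by decide)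
    candidates_hedgeList v (by revert v; decide)

theorem stmt16_general (e f : Finset (Fin 10))
    (φ : Fin 10 → Fin 10) (hφ : Function.Injective φ)
    (hmono : ∀ s ∈ Hedges \ {e, f}, s.image φ ∈ Hedges) :
    φ = id ∨ φ = sigma1 ∨ φ = sigma2 ∨ φ = sigma3 ∨ φ = sigma4 ∨ φ = sigma5 := by
  have hbad : badEdges Hedges Hedges φ ⊆ {e, f} := fun s hs => by
    rw [badEdges, mem_filter] at hs
    by_contra hef
    exact hs.2 (hmono s (mem_sdiff.mpr ⟨hs.1, hef⟩))
  exact Or.inl (eq_id_of_card_badEdges_le_two hφ ((card_le_card hbad).trans card_le_two))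

theorem stmt16 (e f : Finset (Fin 10)) (he : e ∈ Hedges) (hf : f ∈ Hedges)
    (φ : Fin 10 → Fin 10) (hφ : Function.Injective φ)
    (hmono : ∀ s ∈ Hedges \ {e, f}, s.image φ ∈ Hedges)
    (u : ℕ → Fin 10)
    (hinj : ∀ i j, i < 9 → j < 9 → u i = u j → i = j)
    (hedge : ∀ i < 5, te u i ∈ Hedges \ {e, f}) :
    φ = id ∨ φ = sigma1 ∨ φ = sigma2 ∨ φ = sigma3 ∨ φ = sigma4 ∨ φ = sigma5 :=
  stmt16_general e f φ hφ hmono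
end
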